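/- Let ε > 0 and define C₁ = sup{ ‖p‖_{[-1,1],∞} : p ∈ span{ζ_i : σ_i > ε}, ‖p‖_{m,∞} ≤ 1 } and C₂ = sup{ ‖p − Q_ε(p)‖_{[-1,1],∞} : p ∈ P_n, ‖p‖_{[-γ,γ],∞} ≤ ε^{-1} }. Then for every continuous f on [-1,1] and every polynomial p of degree at most n: ‖f − Q_ε(f)‖_{[-1,1],∞} ≤ (1 + √(m+1)·C₁)·‖f − p‖_{[-1,1],∞} + C₂·ε·‖p‖_{[-γ,γ],∞}. -/

import Mathlib

open MeasureTheory Finset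

noncomputable section

/-- The equispaced node `x_k = -1 + 2k/m` in `[-1,1]`. -/
def node (m k : ℕ) : ℝ := -1 + 2 * (k : ℝ) / (m : ℝ)

/-- The discrete semi-inner product `⟨f,g⟩_{m,2} = (2/(m+1)) Σ_{k=0}^m f(x_k) conj(g(x_k))`. -/
def discInner (m : ℕ) (f g : ℝ → ℂ) : ℂ :=
  (2 / ((m : ℂ) + 1)) * ∑ k ∈ Finset.range (m + 1), f (node m k) * (starRingEnd ℂ) (g (node m k))

/-- The discrete `ℓ²` semi-norm `‖f‖_{m,2}`. -/
def discNorm (m : ℕ) (f : ℝ → ℂ) : ℝ :=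
  Real.sqrt ((2 / ((m : ℝ) + 1)) * ∑ k ∈ Finset.range (m + 1), ‖f (node m k)‖ ^ 2)

/-- The discrete sup semi-norm `‖f‖_{m,∞} = max_{0 ≤ k ≤ m} |f(x_k)|`. -/
def discSup (m : ℕ) (f : ℝ → ℂ) : ℝ :=
  ⨆ k : Fin (m + 1), ‖f (node m (k : ℕ))‖

/-- The uniform norm `‖f‖_{I,∞} = sup_{x ∈ I} |f(x)|`. -/
def supNorm (I : Set ℝ) (f : ℝ → ℂ) : ℝ :=
  ⨆ x : I, ‖f (x : ℝ)‖

/-- The Jacobi-type weight `w_γ^{(α,β)}(x) = (1 - x/γ)^α (1 + x/γ)^β`. -/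
def jweight (α β γ x : ℝ) : ℝ := (1 - x / γ) ^ α * (1 + x / γ) ^ β

/-- The weighted `L²` inner product `⟨f,g⟩_w = ∫_{-γ}^{γ} f conj(g) w_γ^{(α,β)}`. -/
def wInner (α β γ : ℝ) (f g : ℝ → ℂ) : ℂ :=
  ∫ x in (-γ)..γ, f x * (starRingEnd ℂ) (g x) * ((jweight α β γ x : ℝ) : ℂ)

/-- The weighted `L²` norm `‖f‖_w`. -/
def wNorm (α β γ : ℝ) (f : ℝ → ℂ) : ℝ :=
  Real.sqrt (∫ x in (-γ)..γ, ‖f x‖ ^ 2 * jweight α β γ x)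

/-- `h₀^{(α,β)} = 2^{α+β+1} Γ(α+1) Γ(β+1) / ((α+β+1) Γ(α+β+1))`. -/
def h0 (α β : ℝ) : ℝ :=
  2 ^ (α + β + 1) * Real.Gamma (α + 1) * Real.Gamma (β + 1) /
    ((α + β + 1) * Real.Gamma (α + β + 1))

/-- A complex polynomial regarded as a function of a real variable. -/
def pf (p : Polynomial ℂ) : ℝ → ℂ := fun x => p.eval (x : ℂ)

/-- The constant `c_{n,γ,α,β} = max_{x ∈ [-γ,γ]} (Σ_{i=0}^n |φ_i(x)|²)^{1/2}`. -/
def cConst (n : ℕ) (γ : ℝ) (φ : ℕ → Polynomial ℂ) : ℝ :=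
  ⨆ x : Set.Icc (-γ) γ,
    Real.sqrt (∑ i ∈ Finset.range (n + 1), ‖pf (φ i) (x : ℝ)‖ ^ 2)

/-- The regularized frame approximation operator
`Q_δ(f) = Σ_{i : σ_i > δ} σ_i^{-2} ⟨f,ζ_i⟩_{m,2} ζ_i`. -/
def Qop (m n : ℕ) (ζ : Fin (n + 1) → Polynomial ℂ) (σ : Fin (n + 1) → ℝ) (δ : ℝ)
    (f : ℝ → ℂ) : ℝ → ℂ :=
  fun x => ∑ i ∈ Finset.univ.filter (fun i : Fin (n + 1) => δ < σ i),
    (discInner m f (pf (ζ i)) / ((σ i ^ 2 : ℝ) : ℂ)) * pf (ζ i) x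

/-- The quantity `C(m,n,γ,δ) = sup{‖p‖_{[-1,1],∞} : p ∈ P_n, ‖p‖_{m,∞} ≤ 1,
‖p‖_{[-γ,γ],∞} ≤ δ⁻¹}`. -/
def Cquant (m n : ℕ) (γ δ : ℝ) : ℝ :=
  sSup {r : ℝ | ∃ p : Polynomial ℂ, p.natDegree ≤ n ∧ discSup m (pf p) ≤ 1 ∧
    supNorm (Set.Icc (-γ) γ) (pf p) ≤ δ⁻¹ ∧ r = supNorm (Set.Icc (-1) 1) (pf p)}

/-- The constant `C₁ = sup{‖p‖_{[-1,1],∞} : p ∈ span{ζ_i : σ_i > ε}, ‖p‖_{m,∞} ≤ 1}`. -/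
def C1const (m n : ℕ) (ζ : Fin (n + 1) → Polynomial ℂ) (σ : Fin (n + 1) → ℝ) (ε : ℝ) : ℝ :=
  sSup {r : ℝ | ∃ p : Polynomial ℂ, p ∈ Submodule.span ℂ (ζ '' {i | ε < σ i}) ∧
    discSup m (pf p) ≤ 1 ∧ r = supNorm (Set.Icc (-1) 1) (pf p)}

/-- The constant `C₂ = sup{‖p - Q_ε(p)‖_{[-1,1],∞} : p ∈ P_n, ‖p‖_{[-γ,γ],∞} ≤ ε⁻¹}`. -/
def C2const (m n : ℕ) (γ : ℝ) (ζ : Fin (n + 1) → Polynomial ℂ) (σ : Fin (n + 1) → ℝ)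
    (ε : ℝ) : ℝ :=
  sSup {r : ℝ | ∃ p : Polynomial ℂ, p.natDegree ≤ n ∧
    supNorm (Set.Icc (-γ) γ) (pf p) ≤ ε⁻¹ ∧
    r = supNorm (Set.Icc (-1) 1) (fun x => pf p x - Qop m n ζ σ ε (pf p) x)}

/-- The condition number `κ(Q_δ) = sup{‖Q_δ(q)‖_{[-1,1],∞} : q ∈ C([-1,1]), ‖q‖_{m,∞} ≤ 1}`. -/
def kappa (m n : ℕ) (ζ : Fin (n + 1) → Polynomial ℂ) (σ : Fin (n + 1) → ℝ) (δ : ℝ) : ℝ :=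
  sSup {r : ℝ | ∃ q : ℝ → ℂ, ContinuousOn q (Set.Icc (-1) 1) ∧ discSup m q ≤ 1 ∧
    r = supNorm (Set.Icc (-1) 1) (Qop m n ζ σ δ q)}

/-- The Bernstein ellipse `E_θ = {(z + z⁻¹)/2 : 1 ≤ |z| ≤ θ}`. -/
def bernsteinEllipse (θ : ℝ) : Set ℂ :=
  {w | ∃ z : ℂ, 1 ≤ ‖z‖ ∧ ‖z‖ ≤ θ ∧ w = (z + z⁻¹) / 2}

/-- The uniform norm on a subset of `ℂ`. -/
def supNormC (E : Set ℂ) (f : ℂ → ℂ) : ℝ :=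
  ⨆ z : E, ‖f (z : ℂ)‖

/-- The `C^k` norm `‖f‖_{C^k([-1,1])} = max_{0 ≤ j ≤ k} ‖f^{(j)}‖_{[-1,1],∞}`. -/
def CkNorm (k : ℕ) (f : ℝ → ℂ) : ℝ :=
  ⨆ j : Fin (k + 1), supNorm (Set.Icc (-1) 1) (iteratedDerivWithin (j : ℕ) f (Set.Icc (-1) 1))

/-! With `g = f - p`, write `f - Q_ε f = (g - Q_ε g) + (p - Q_ε p)`. Sampled at the nodes, `Q_ε` is
the orthogonal projection of `ℂ^{m+1}` onto the span of the sampled `ζ_i` with `σ_i > ε`, so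
`‖Q_ε g‖_{m,∞} ≤ ‖Q_ε g‖_{ℓ²} ≤ ‖g‖_{ℓ²} ≤ √(m+1) ‖g‖_{m,∞}`; since `Q_ε g` lies in that span,
`C₁` turns this into a bound on `[-1,1]`. By homogeneity, `C₂` bounds `p - Q_ε p` by
`C₂ ε ‖p‖_{[-γ,γ],∞}`. Both suprema are finite because `Q_ε` is the identity on the span and
is bounded from `‖·‖_{m,∞}` to `‖·‖_{[-1,1],∞}`. -/

theorem mul_le_sSup_mul_of_homogeneous {M : Type*} [SMul ℝ M] {V : Set M} {A B : M → ℝ}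
    (hV : ∀ c : ℝ, 0 < c → ∀ x ∈ V, c • x ∈ V)
    (hA : ∀ c : ℝ, 0 < c → ∀ x, A (c • x) = c * A x)
    (hB : ∀ c : ℝ, 0 < c → ∀ x, B (c • x) = c * B x) {b : ℝ} (hb : 0 < b)
    (hbdd : BddAbove {r | ∃ x, x ∈ V ∧ B x ≤ b ∧ r = A x}) {x : M} (hx : x ∈ V)
    (hBx : 0 ≤ B x) :
    b * A x ≤ sSup {r | ∃ x, x ∈ V ∧ B x ≤ b ∧ r = A x} * B x := by
  set C := sSup {r | ∃ x, x ∈ V ∧ B x ≤ b ∧ r = A x}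
  have hscale : ∀ c, 0 < c → c * B x ≤ b → c * A x ≤ C := fun c hc hcB =>
    le_csSup hbdd ⟨c • x, hV c hc x hx, by rwa [hB c hc], (hA c hc x).symm⟩
  rcases hBx.eq_or_lt with h0 | hpos
  · -- every multiple of `x` is admissible, so `A x > 0` would make the supremum infinite
    have hA0 : A x ≤ 0 := by
      by_contra! hA0
      have := hscale ((|C| + 1) / A x) (by positivity) (by rw [← h0, mul_zero]; exact hb.le)
      rw [div_mul_cancel₀ _ hA0.ne'] at this
      linarith [le_abs_self C]
    rw [← h0, mul_zero]
    exact mul_nonpos_of_nonneg_of_nonpos hb.le hA0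
  · have := hscale (b / B x) (div_pos hb hpos) (div_mul_cancel₀ _ hpos.ne').le
    rwa [div_mul_eq_mul_div, div_le_iff₀ hpos] at this

theorem norm_sum_inner_div_inner_smul_le {𝕜 E ι : Type*} [RCLike 𝕜] [NormedAddCommGroup E]
    [InnerProductSpace 𝕜 E] (s : Finset ι) (v : ι → E)
    (hv : ∀ i ∈ s, ∀ j ∈ s, i ≠ j → inner 𝕜 (v i) (v j) = 0) (x : E) :
    ‖∑ i ∈ s, (inner 𝕜 (v i) x / inner 𝕜 (v i) (v i)) • v i‖ ≤ ‖x‖ := by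
  set P := ∑ i ∈ s, (inner 𝕜 (v i) x / inner 𝕜 (v i) (v i)) • v i
  have hperp : ∀ j ∈ s, inner 𝕜 (v j) (x - P) = 0 := by
    intro j hj
    rw [inner_sub_right, inner_sum, Finset.sum_eq_single_of_mem j hj fun i hi hij => by
      rw [inner_smul_right, hv j hj i hi (Ne.symm hij), mul_zero], inner_smul_right]
    by_cases h0 : inner 𝕜 (v j) (v j) = 0
    · simp [inner_self_eq_zero.mp h0]
    · rw [div_mul_cancel₀ _ h0, sub_self]
  have hP : inner 𝕜 P (x - P) = 0 := by
    rw [sum_inner]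
    exact Finset.sum_eq_zero fun i hi => by rw [inner_smul_left, hperp i hi, mul_zero]
  have hpyth := norm_add_sq_eq_norm_sq_add_norm_sq_of_inner_eq_zero P (x - P) hP
  rw [add_sub_cancel] at hpyth
  exact (pow_le_pow_iff_left₀ (norm_nonneg P) (norm_nonneg x) two_ne_zero).mp
    (by nlinarith [sq_nonneg ‖x - P‖])

section UniformNorm

variable {I : Set ℝ} {f g : ℝ → ℂ}

lemma supNorm_nonneg (I : Set ℝ) (f : ℝ → ℂ) : 0 ≤ supNorm I f :=
  Real.iSup_nonneg fun _ => norm_nonneg _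

lemma supNorm_le {M : ℝ} (hM : 0 ≤ M) (h : ∀ x ∈ I, ‖f x‖ ≤ M) : supNorm I f ≤ M :=
  Real.iSup_le (fun x => h x x.2) hM

lemma norm_le_supNorm (hI : IsCompact I) (hf : ContinuousOn f I) {x : ℝ} (hx : x ∈ I) :
    ‖f x‖ ≤ supNorm I f := by
  have hbdd := hI.bddAbove_image (continuous_norm.comp_continuousOn hf)
  rw [Set.image_eq_range] at hbdd
  exact le_ciSup hbdd ⟨x, hx⟩

lemma supNorm_const_mul (I : Set ℝ) (c : ℂ) (f : ℝ → ℂ) :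
    supNorm I (fun x => c * f x) = ‖c‖ * supNorm I f := by
  simp only [supNorm, norm_mul, Real.mul_iSup_of_nonneg (norm_nonneg c)]

lemma supNorm_mono {J : Set ℝ} (hJ : IsCompact J) (hf : ContinuousOn f J) (hIJ : I ⊆ J) :
    supNorm I f ≤ supNorm J f :=
  supNorm_le (supNorm_nonneg J f) fun _ hx => norm_le_supNorm hJ hf (hIJ hx)

lemma supNorm_add_le (hI : IsCompact I) (hf : ContinuousOn f I) (hg : ContinuousOn g I) :
    supNorm I (f + g) ≤ supNorm I f + supNorm I g :=
  supNorm_le (add_nonneg (supNorm_nonneg I f) (supNorm_nonneg I g)) fun _ hx =>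
    (norm_add_le _ _).trans
      (add_le_add (norm_le_supNorm hI hf hx) (norm_le_supNorm hI hg hx))

lemma supNorm_sub_le (hI : IsCompact I) (hf : ContinuousOn f I) (hg : ContinuousOn g I) :
    supNorm I (f - g) ≤ supNorm I f + supNorm I g :=
  supNorm_le (add_nonneg (supNorm_nonneg I f) (supNorm_nonneg I g)) fun _ hx =>
    (norm_sub_le _ _).trans
      (add_le_add (norm_le_supNorm hI hf hx) (norm_le_supNorm hI hg hx))

end UniformNorm

section DiscreteNorm

variable {m : ℕ} {f g : ℝ → ℂ}

lemma node_mem_Icc {k : ℕ} (hk : k ≤ m) : node m k ∈ Set.Icc (-1 : ℝ) 1 := by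
  have h0 : 0 ≤ 2 * (k : ℝ) / m := by positivity
  have h2 : 2 * (k : ℝ) / m ≤ 2 :=
    div_le_of_le_mul₀ (by positivity) zero_le_two (by norm_cast; omega)
  constructor <;> simp only [node] <;> linarith

lemma discSup_nonneg (m : ℕ) (f : ℝ → ℂ) : 0 ≤ discSup m f :=
  Real.iSup_nonneg fun _ => norm_nonneg _

lemma norm_le_discSup (k : Fin (m + 1)) : ‖f (node m k)‖ ≤ discSup m f :=
  le_ciSup (f := fun k : Fin (m + 1) => ‖f (node m k)‖) (Set.finite_range _).bddAbove k

lemma discSup_le {M : ℝ} (h : ∀ k : Fin (m + 1), ‖f (node m k)‖ ≤ M) : discSup m f ≤ M :=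
  ciSup_le h

lemma discSup_const_mul (m : ℕ) (c : ℂ) (f : ℝ → ℂ) :
    discSup m (fun x => c * f x) = ‖c‖ * discSup m f := by
  simp only [discSup, norm_mul, Real.mul_iSup_of_nonneg (norm_nonneg c)]

lemma discSup_le_supNorm {I : Set ℝ} (hI : IsCompact I) (hsub : Set.Icc (-1) 1 ⊆ I)
    (hf : ContinuousOn f I) : discSup m f ≤ supNorm I f :=
  discSup_le fun k => norm_le_supNorm hI hf (hsub (node_mem_Icc (Nat.lt_succ_iff.mp k.2)))

lemma norm_discInner_le (m : ℕ) (f g : ℝ → ℂ) :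
    ‖discInner m f g‖ ≤ 2 * discSup m f * discSup m g := by
  have hterm : ∀ k ∈ Finset.range (m + 1),
      ‖f (node m k) * starRingEnd ℂ (g (node m k))‖ ≤ discSup m f * discSup m g := fun k hk => by
    rw [norm_mul, Complex.norm_conj]
    exact mul_le_mul (norm_le_discSup ⟨k, Finset.mem_range.mp hk⟩)
      (norm_le_discSup ⟨k, Finset.mem_range.mp hk⟩) (norm_nonneg _) (discSup_nonneg m f)
  have hsum := (norm_sum_le _ _).trans (Finset.sum_le_sum hterm)
  rw [Finset.sum_const, Finset.card_range, nsmul_eq_mul] at hsum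
  have hm : ‖(2 : ℂ) / ((m : ℂ) + 1)‖ = 2 / ((m : ℝ) + 1) := by
    rw [norm_div, ← Nat.cast_succ, Complex.norm_natCast, Complex.norm_two, Nat.cast_succ]
  calc ‖discInner m f g‖ ≤ 2 / ((m : ℝ) + 1) * (((m + 1 : ℕ) : ℝ) * (discSup m f * discSup m g)) := by
        rw [discInner, norm_mul, hm]
        exact mul_le_mul_of_nonneg_left hsum (by positivity)
    _ = 2 * discSup m f * discSup m g := by push_cast; field_simp

end DiscreteNorm

def sample (m : ℕ) : (ℝ → ℂ) →ₗ[ℂ] EuclideanSpace ℂ (Fin (m + 1)) where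
  toFun f := WithLp.toLp 2 fun k => f (node m k)
  map_add' _ _ := rfl
  map_smul' _ _ := rfl

section Sampling

variable {m : ℕ}

lemma sample_apply (f : ℝ → ℂ) (k : Fin (m + 1)) : sample m f k = f (node m k) := rfl

lemma discInner_eq_inner (f g : ℝ → ℂ) :
    discInner m f g = 2 / ((m : ℂ) + 1) * inner ℂ (sample m g) (sample m f) := by
  rw [discInner, PiLp.inner_apply,
    ← Fin.sum_univ_eq_sum_range fun k => f (node m k) * starRingEnd ℂ (g (node m k))]
  simp only [sample_apply, RCLike.inner_apply]

lemma norm_sample_le (f : ℝ → ℂ) : ‖sample m f‖ ≤ √((m : ℝ) + 1) * discSup m f := by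
  rw [EuclideanSpace.norm_eq]
  calc √(∑ k, ‖sample m f k‖ ^ 2) ≤ √(∑ _k : Fin (m + 1), discSup m f ^ 2) :=
        Real.sqrt_le_sqrt <| Finset.sum_le_sum fun k _ =>
          pow_le_pow_left₀ (norm_nonneg _) (norm_le_discSup k) 2
    _ = √((m : ℝ) + 1) * discSup m f := by
        rw [Finset.sum_const, Finset.card_univ, Fintype.card_fin, nsmul_eq_mul,
          Real.sqrt_mul (by positivity), Real.sqrt_sq (discSup_nonneg m f)]
        push_cast
        rfl

lemma discInner_add_left (f g h : ℝ → ℂ) :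
    discInner m (f + g) h = discInner m f h + discInner m g h := by
  simp only [discInner_eq_inner, map_add, inner_add_right, mul_add]

lemma discInner_sub_left (f g h : ℝ → ℂ) :
    discInner m (f - g) h = discInner m f h - discInner m g h := by
  simp only [discInner_eq_inner, map_sub, inner_sub_right, mul_sub]

lemma discInner_smul_left (c : ℂ) (f h : ℝ → ℂ) :
    discInner m (c • f) h = c * discInner m f h := by
  simp only [discInner_eq_inner, map_smul, inner_smul_right, mul_left_comm]

end Sampling

lemma continuous_pf (p : Polynomial ℂ) : Continuous (pf p) :=
  p.continuous.comp Complex.continuous_ofReal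

lemma pf_add (p q : Polynomial ℂ) : pf (p + q) = pf p + pf q := by
  ext x; simp [pf]

lemma pf_smul (c : ℂ) (p : Polynomial ℂ) : pf (c • p) = c • pf p := by
  ext x; simp [pf]

lemma pf_real_smul (c : ℝ) (p : Polynomial ℂ) : pf (c • p) = (c : ℂ) • pf p := by
  rw [← pf_smul, Complex.coe_smul]

def IsDiscOrthogonal (m n : ℕ) (ζ : Fin (n + 1) → Polynomial ℂ) (σ : Fin (n + 1) → ℝ) : Prop :=
  ∀ i j, discInner m (pf (ζ i)) (pf (ζ j)) = if i = j then (((σ i) ^ 2 : ℝ) : ℂ) else 0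

def Qpoly (m n : ℕ) (ζ : Fin (n + 1) → Polynomial ℂ) (σ : Fin (n + 1) → ℝ) (δ : ℝ)
    (f : ℝ → ℂ) : Polynomial ℂ :=
  ∑ i ∈ Finset.univ.filter (fun i : Fin (n + 1) => δ < σ i),
    (discInner m f (pf (ζ i)) / ((σ i ^ 2 : ℝ) : ℂ)) • ζ i

section Projection

variable {m n : ℕ} {ζ : Fin (n + 1) → Polynomial ℂ} {σ : Fin (n + 1) → ℝ} {δ : ℝ}

lemma Qop_eq_sum (f : ℝ → ℂ) :
    Qop m n ζ σ δ f = ∑ i ∈ Finset.univ.filter (fun i : Fin (n + 1) => δ < σ i),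
      (discInner m f (pf (ζ i)) / ((σ i ^ 2 : ℝ) : ℂ)) • pf (ζ i) := by
  ext x; simp [Qop]

lemma continuous_Qop (f : ℝ → ℂ) : Continuous (Qop m n ζ σ δ f) :=
  continuous_finsetSum _ fun i _ => continuous_const.mul (continuous_pf (ζ i))

lemma Qop_add (f g : ℝ → ℂ) : Qop m n ζ σ δ (f + g) = Qop m n ζ σ δ f + Qop m n ζ σ δ g := by
  simp only [Qop_eq_sum, discInner_add_left, add_div, add_smul, Finset.sum_add_distrib]

lemma Qop_sub (f g : ℝ → ℂ) : Qop m n ζ σ δ (f - g) = Qop m n ζ σ δ f - Qop m n ζ σ δ g := by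
  simp only [Qop_eq_sum, discInner_sub_left, sub_div, sub_smul, Finset.sum_sub_distrib]

lemma Qop_smul (c : ℂ) (f : ℝ → ℂ) : Qop m n ζ σ δ (c • f) = c • Qop m n ζ σ δ f := by
  simp only [Qop_eq_sum, discInner_smul_left, mul_div_assoc, mul_smul, Finset.smul_sum]

lemma pf_Qpoly (f : ℝ → ℂ) : pf (Qpoly m n ζ σ δ f) = Qop m n ζ σ δ f := by
  ext x; simp [Qpoly, Qop, pf, Polynomial.eval_finsetSum]

lemma Qpoly_mem_span (f : ℝ → ℂ) :
    Qpoly m n ζ σ δ f ∈ Submodule.span ℂ (ζ '' {i | δ < σ i}) :=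
  Submodule.sum_mem _ fun i hi => Submodule.smul_mem _ _
    (Submodule.subset_span ⟨i, (Finset.mem_filter.mp hi).2, rfl⟩)

lemma Qop_pf_self (hδ : 0 ≤ δ) (hζ : IsDiscOrthogonal m n ζ σ) {j : Fin (n + 1)}
    (hj : δ < σ j) : Qop m n ζ σ δ (pf (ζ j)) = pf (ζ j) := by
  have hσj : ((σ j ^ 2 : ℝ) : ℂ) ≠ 0 := by
    exact_mod_cast (pow_pos (hδ.trans_lt hj) 2).ne'
  rw [Qop_eq_sum, Finset.sum_eq_single_of_mem j (by simpa using hj) fun i _ hij => by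
    rw [hζ j i, if_neg (Ne.symm hij), zero_div, zero_smul], hζ j j, if_pos rfl,
    div_self hσj, one_smul]

lemma Qop_pf_of_mem_span (hδ : 0 ≤ δ) (hζ : IsDiscOrthogonal m n ζ σ) {q : Polynomial ℂ}
    (hq : q ∈ Submodule.span ℂ (ζ '' {i | δ < σ i})) : Qop m n ζ σ δ (pf q) = pf q := by
  induction hq using Submodule.span_induction with
  | mem _ h =>
    obtain ⟨j, hj, rfl⟩ := h
    exact Qop_pf_self hδ hζ hj
  | zero =>
    rw [show pf 0 = 0 from funext fun _ => Polynomial.eval_zero, ← zero_smul ℂ (0 : ℝ → ℂ),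
      Qop_smul, zero_smul, zero_smul]
  | add _ _ _ _ hp hq => rw [pf_add, Qop_add, hp, hq]
  | smul c _ _ hp => rw [pf_smul, Qop_smul, hp]

lemma discSup_Qop_le (hζ : IsDiscOrthogonal m n ζ σ) (f : ℝ → ℂ) :
    discSup m (Qop m n ζ σ δ f) ≤ √((m : ℝ) + 1) * discSup m f := by
  set S := Finset.univ.filter (fun i : Fin (n + 1) => δ < σ i)
  set v := fun i => sample m (pf (ζ i))
  have hc : (2 : ℂ) / ((m : ℂ) + 1) ≠ 0 := div_ne_zero two_ne_zero (by norm_cast)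
  have horth : ∀ i ∈ S, ∀ j ∈ S, i ≠ j →
      inner ℂ (v i) (v j) = 0 := fun i _ j _ hij => by
    simpa [discInner_eq_inner, hc, Ne.symm hij] using hζ j i
  have hsample : sample m (Qop m n ζ σ δ f) =
      ∑ i ∈ S, (inner ℂ (v i) (sample m f) / inner ℂ (v i) (v i)) • v i := by
    rw [Qop_eq_sum, map_sum]
    refine Finset.sum_congr rfl fun i _ => ?_
    have hσ : ((σ i ^ 2 : ℝ) : ℂ) = discInner m (pf (ζ i)) (pf (ζ i)) := by
      rw [hζ i i, if_pos rfl]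
    rw [map_smul, hσ, discInner_eq_inner, discInner_eq_inner, mul_div_mul_left _ _ hc]
  refine discSup_le fun k => ?_
  calc ‖Qop m n ζ σ δ f (node m k)‖ = ‖sample m (Qop m n ζ σ δ f) k‖ := rfl
    _ ≤ ‖sample m (Qop m n ζ σ δ f)‖ := PiLp.norm_apply_le _ k
    _ ≤ ‖sample m f‖ := hsample ▸ norm_sum_inner_div_inner_smul_le _ v horth _
    _ ≤ √((m : ℝ) + 1) * discSup m f := norm_sample_le f

end Projection

section Constants

variable {m n : ℕ} {ζ : Fin (n + 1) → Polynomial ℂ} {σ : Fin (n + 1) → ℝ} {δ : ℝ}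

lemma exists_supNorm_Qop_le {I : Set ℝ} (hI : IsCompact I) :
    ∃ K, 0 ≤ K ∧ ∀ f, supNorm I (Qop m n ζ σ δ f) ≤ K * discSup m f := by
  have hterm : ∀ i, 0 ≤ 2 * discSup m (pf (ζ i)) * supNorm I (pf (ζ i)) / σ i ^ 2 := fun i => by
    have := discSup_nonneg m (pf (ζ i)); have := supNorm_nonneg I (pf (ζ i)); positivity
  refine ⟨∑ i, 2 * discSup m (pf (ζ i)) * supNorm I (pf (ζ i)) / σ i ^ 2,
    Finset.sum_nonneg fun i _ => hterm i, fun f => ?_⟩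
  rw [Finset.sum_mul]
  refine supNorm_le (Finset.sum_nonneg fun i _ => mul_nonneg (hterm i) (discSup_nonneg m f))
    fun x hx => ?_
  refine (norm_sum_le _ _).trans <| (Finset.sum_le_sum fun i _ => ?_).trans <|
    Finset.sum_le_sum_of_subset_of_nonneg (Finset.filter_subset _ _) fun i _ _ =>
      mul_nonneg (hterm i) (discSup_nonneg m f)
  rw [norm_mul, norm_div, Complex.norm_real, Real.norm_of_nonneg (sq_nonneg _),
    div_mul_eq_mul_div, div_mul_eq_mul_div]
  gcongr ?_ / _
  calc ‖discInner m f (pf (ζ i))‖ * ‖pf (ζ i) x‖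
      ≤ 2 * discSup m f * discSup m (pf (ζ i)) * supNorm I (pf (ζ i)) :=
        mul_le_mul (norm_discInner_le m f _)
          (norm_le_supNorm hI (continuous_pf _).continuousOn hx) (norm_nonneg _) (by
            have := discSup_nonneg m f; have := discSup_nonneg m (pf (ζ i)); positivity)
    _ = _ := by ring

lemma supNorm_pf_real_smul (I : Set ℝ) {c : ℝ} (hc : 0 < c) (p : Polynomial ℂ) :
    supNorm I (pf (c • p)) = c * supNorm I (pf p) := by
  rw [pf_real_smul]
  exact (supNorm_const_mul I c (pf p)).trans (by rw [Complex.norm_real, Real.norm_of_nonneg hc.le])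

lemma discSup_pf_real_smul (m : ℕ) {c : ℝ} (hc : 0 < c) (p : Polynomial ℂ) :
    discSup m (pf (c • p)) = c * discSup m (pf p) := by
  rw [pf_real_smul]
  exact (discSup_const_mul m c (pf p)).trans (by rw [Complex.norm_real, Real.norm_of_nonneg hc.le])

lemma supNorm_le_C1const_mul (hδ : 0 ≤ δ) (hζ : IsDiscOrthogonal m n ζ σ) {q : Polynomial ℂ}
    (hq : q ∈ Submodule.span ℂ (ζ '' {i | δ < σ i})) :
    supNorm (Set.Icc (-1) 1) (pf q) ≤ C1const m n ζ σ δ * discSup m (pf q) := by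
  obtain ⟨K, hK, hQ⟩ := exists_supNorm_Qop_le (m := m) (ζ := ζ) (σ := σ) (δ := δ) isCompact_Icc
  have hbdd : BddAbove {r | ∃ p : Polynomial ℂ, p ∈ Submodule.span ℂ (ζ '' {i | δ < σ i}) ∧
      discSup m (pf p) ≤ 1 ∧ r = supNorm (Set.Icc (-1) 1) (pf p)} := by
    refine ⟨K, fun r ⟨p, hp, hp1, hr⟩ => ?_⟩
    rw [hr, ← Qop_pf_of_mem_span hδ hζ hp]
    exact (hQ _).trans (mul_le_of_le_one_right hK hp1)
  have := mul_le_sSup_mul_of_homogeneous (A := fun p => supNorm (Set.Icc (-1) 1) (pf p))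
    (B := fun p => discSup m (pf p))
    (fun c _ p hp => Submodule.smul_of_tower_mem _ c hp)
    (fun c hc p => supNorm_pf_real_smul _ hc p)
    (fun c hc p => discSup_pf_real_smul m hc p)
    one_pos hbdd hq (discSup_nonneg m _)
  rwa [one_mul] at this

lemma C1const_nonneg : 0 ≤ C1const m n ζ σ δ :=
  Real.sSup_nonneg fun _ ⟨_, _, _, hr⟩ => hr ▸ supNorm_nonneg _ _

lemma supNorm_Qop_le_C1const_mul (hδ : 0 ≤ δ) (hζ : IsDiscOrthogonal m n ζ σ) {g : ℝ → ℂ}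
    (hg : ContinuousOn g (Set.Icc (-1) 1)) :
    supNorm (Set.Icc (-1) 1) (Qop m n ζ σ δ g) ≤
      √((m : ℝ) + 1) * C1const m n ζ σ δ * supNorm (Set.Icc (-1) 1) g := by
  rw [← pf_Qpoly]
  refine (supNorm_le_C1const_mul hδ hζ (Qpoly_mem_span g)).trans ?_
  rw [pf_Qpoly, mul_comm _ (C1const _ _ _ _ _), mul_assoc]
  gcongr
  · exact C1const_nonneg
  · exact (discSup_Qop_le hζ g).trans
      (by gcongr; exact discSup_le_supNorm isCompact_Icc subset_rfl hg)

lemma supNorm_sub_Qop_le_C2const {γ ε : ℝ} (hγ : 1 ≤ γ) (hε : 0 < ε) {p : Polynomial ℂ}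
    (hp : p.natDegree ≤ n) :
    supNorm (Set.Icc (-1) 1) (pf p - Qop m n ζ σ ε (pf p)) ≤
      C2const m n γ ζ σ ε * ε * supNorm (Set.Icc (-γ) γ) (pf p) := by
  have hsub : Set.Icc (-1 : ℝ) 1 ⊆ Set.Icc (-γ) γ := Set.Icc_subset_Icc (by linarith) hγ
  obtain ⟨K, hK, hQ⟩ := exists_supNorm_Qop_le (m := m) (ζ := ζ) (σ := σ) (δ := ε) isCompact_Icc
  have hbdd : BddAbove {r | ∃ q : Polynomial ℂ, q.natDegree ≤ n ∧
      supNorm (Set.Icc (-γ) γ) (pf q) ≤ ε⁻¹ ∧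
      r = supNorm (Set.Icc (-1) 1) (fun x => pf q x - Qop m n ζ σ ε (pf q) x)} := by
    refine ⟨ε⁻¹ + K * ε⁻¹, fun r ⟨q, _, hq, hr⟩ => ?_⟩
    have hcont := (continuous_pf q).continuousOn (s := Set.Icc (-γ) γ)
    rw [hr]
    refine (supNorm_sub_le isCompact_Icc (continuous_pf q).continuousOn
      (continuous_Qop _).continuousOn).trans (add_le_add ?_ ?_)
    · exact (supNorm_mono isCompact_Icc hcont hsub).trans hq
    · refine (hQ _).trans (mul_le_mul_of_nonneg_left ?_ hK)
      exact (discSup_le_supNorm isCompact_Icc hsub hcont).trans hq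
  have := mul_le_sSup_mul_of_homogeneous
    (A := fun q => supNorm (Set.Icc (-1) 1) (fun x => pf q x - Qop m n ζ σ ε (pf q) x))
    (B := fun q => supNorm (Set.Icc (-γ) γ) (pf q)) (V := {q | q.natDegree ≤ n})
    (fun c _ q hq => (Polynomial.natDegree_smul_le c q).trans hq)
    (fun c hc q => by
      simp only [pf_real_smul, Qop_smul, Pi.smul_apply, smul_eq_mul, ← mul_sub]
      exact (supNorm_const_mul _ c _).trans (by rw [Complex.norm_real, Real.norm_of_nonneg hc.le]))
    (fun c hc q => supNorm_pf_real_smul _ hc q) (inv_pos.mpr hε) hbdd hp (supNorm_nonneg _ _)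
  rwa [inv_mul_le_iff₀ hε, ← mul_assoc, mul_comm ε] at this

end Constants

theorem stmt5_general (γ : ℝ) (hγ : 1 < γ)
    (m n : ℕ)
    (ζ : Fin (n + 1) → Polynomial ℂ) (σ : Fin (n + 1) → ℝ)
    (hζd : ∀ i j, discInner m (pf (ζ i)) (pf (ζ j)) =
      if i = j then (((σ i) ^ 2 : ℝ) : ℂ) else 0)
    (ε : ℝ) (hε : 0 < ε)
    (f : ℝ → ℂ) (hf : ContinuousOn f (Set.Icc (-1) 1))
    (p : Polynomial ℂ) (hp : p.natDegree ≤ n) :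
    supNorm (Set.Icc (-1) 1) (fun x => f x - Qop m n ζ σ ε f x) ≤
      (1 + Real.sqrt ((m : ℝ) + 1) * C1const m n ζ σ ε) *
        supNorm (Set.Icc (-1) 1) (fun x => f x - pf p x) +
      C2const m n γ ζ σ ε * ε * supNorm (Set.Icc (-γ) γ) (pf p) := by
  have hI : IsCompact (Set.Icc (-1 : ℝ) 1) := isCompact_Icc
  set g := f - pf p with hg_def
  have hg : ContinuousOn g (Set.Icc (-1) 1) := hf.sub (continuous_pf p).continuousOn
  have hQg := supNorm_Qop_le_C1const_mul hε.le hζd hg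
  have hQp := supNorm_sub_Qop_le_C2const (m := m) (ζ := ζ) (σ := σ) hγ.le hε hp
  have hsplit : f - Qop m n ζ σ ε f = (g - Qop m n ζ σ ε g) + (pf p - Qop m n ζ σ ε (pf p)) := by
    rw [Qop_sub, hg_def]; abel
  change supNorm _ (f - Qop m n ζ σ ε f) ≤ _ * supNorm _ g + _
  rw [hsplit]
  calc supNorm (Set.Icc (-1) 1) ((g - Qop m n ζ σ ε g) + (pf p - Qop m n ζ σ ε (pf p)))
      ≤ supNorm (Set.Icc (-1) 1) (g - Qop m n ζ σ ε g) +
          supNorm (Set.Icc (-1) 1) (pf p - Qop m n ζ σ ε (pf p)) :=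
        supNorm_add_le hI (hg.sub (continuous_Qop g).continuousOn)
          ((continuous_pf p).sub (continuous_Qop _)).continuousOn
    _ ≤ supNorm (Set.Icc (-1) 1) g + supNorm (Set.Icc (-1) 1) (Qop m n ζ σ ε g) +
          supNorm (Set.Icc (-1) 1) (pf p - Qop m n ζ σ ε (pf p)) := by
        gcongr
        exact supNorm_sub_le hI hg (continuous_Qop g).continuousOn
    _ ≤ _ := by linarith

/-- the rough error bound
`‖f − Q_ε(f)‖ ≤ (1 + √(m+1) C₁) ‖f − p‖ + C₂ ε ‖p‖`. -/
theorem stmt5 (α β γ : ℝ) (hα : -1 < α) (hβ : -1 < β) (hγ : 1 < γ)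
    (m n : ℕ) (hn : 1 ≤ n) (hmn : n ≤ m)
    (ζ : Fin (n + 1) → Polynomial ℂ) (σ : Fin (n + 1) → ℝ) (hσ : ∀ i, 0 < σ i)
    (hζdeg : ∀ i, (ζ i).natDegree ≤ n)
    (hζspan : ∀ p : Polynomial ℂ, p.natDegree ≤ n → p ∈ Submodule.span ℂ (Set.range ζ))
    (hζw : ∀ i j, wInner α β γ (pf (ζ i)) (pf (ζ j)) = if i = j then 1 else 0)
    (hζd : ∀ i j, discInner m (pf (ζ i)) (pf (ζ j)) =
      if i = j then (((σ i) ^ 2 : ℝ) : ℂ) else 0)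
    (ε : ℝ) (hε : 0 < ε)
    (f : ℝ → ℂ) (hf : ContinuousOn f (Set.Icc (-1) 1))
    (p : Polynomial ℂ) (hp : p.natDegree ≤ n) :
    supNorm (Set.Icc (-1) 1) (fun x => f x - Qop m n ζ σ ε f x) ≤
      (1 + Real.sqrt ((m : ℝ) + 1) * C1const m n ζ σ ε) *
        supNorm (Set.Icc (-1) 1) (fun x => f x - pf p x) +
      C2const m n γ ζ σ ε * ε * supNorm (Set.Icc (-γ) γ) (pf p) :=
  stmt5_general γ hγ m n ζ σ hζd ε hε f hf p hp
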